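/- Let f satisfy condition (F) with lim_{y→∞} f(y)/y = +∞, and let ρ, σ be density matrices with supp ρ ⊄ supp σ. Then D'_f(ρ||σ) = D_f^max(ρ||σ) = +∞; moreover, for every sequence (σ_n) of positive semidefinite matrices with supp σ_n ⊇ supp ρ ∪ supp σ and σ_n → σ, lim_{n→∞} D'_f(ρ||σ_n) = +∞. -/

import Mathlib

open Matrix Filter MeasureTheory
open scoped Topology Classical ComplexOrder

noncomputable section

/-- Functional calculus for Hermitian matrices (junk value `0` for non-Hermitian input). -/
def matFun (f : ℝ → ℝ) {n : ℕ} (A : Matrix (Fin n) (Fin n) ℂ) : Matrix (Fin n) (Fin n) ℂ :=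
  if h : A.IsHermitian then
    (h.eigenvectorUnitary : Matrix (Fin n) (Fin n) ℂ) *
      Matrix.diagonal (fun i => (f (h.eigenvalues i) : ℂ)) *
      star (h.eigenvectorUnitary : Matrix (Fin n) (Fin n) ℂ)
  else 0

/-- Square root of a positive semidefinite matrix. -/
def sqrtm {n : ℕ} (A : Matrix (Fin n) (Fin n) ℂ) : Matrix (Fin n) (Fin n) ℂ :=
  matFun Real.sqrt A

/-- Square root of the Moore–Penrose inverse of a positive semidefinite matrix. -/
def pinvSqrt {n : ℕ} (A : Matrix (Fin n) (Fin n) ℂ) : Matrix (Fin n) (Fin n) ℂ :=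
  matFun (fun x => (Real.sqrt x)⁻¹) A

/-- Moore–Penrose inverse of a positive semidefinite matrix. -/
def mpinv {n : ℕ} (A : Matrix (Fin n) (Fin n) ℂ) : Matrix (Fin n) (Fin n) ℂ :=
  matFun (fun x => x⁻¹) A

/-- Orthogonal projection onto the support of a positive semidefinite matrix. -/
def suppProj {n : ℕ} (A : Matrix (Fin n) (Fin n) ℂ) : Matrix (Fin n) (Fin n) ℂ :=
  matFun (fun x => if x = 0 then 0 else 1) A

/-- Commutative Radon–Nikodym derivative `d(ρ,σ) = σ^{-1/2} ρ σ^{-1/2}`. -/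
def dRN {n : ℕ} (ρ σ : Matrix (Fin n) (Fin n) ℂ) : Matrix (Fin n) (Fin n) ℂ :=
  pinvSqrt σ * ρ * pinvSqrt σ

/-- `supp ρ ⊆ supp σ`. -/
def suppLE {n : ℕ} (ρ σ : Matrix (Fin n) (Fin n) ℂ) : Prop :=
  LinearMap.range ρ.mulVecLin ≤ LinearMap.range σ.mulVecLin

/-- Loewner order `A ≤ B`. -/
def LoewnerLE {n : ℕ} (A B : Matrix (Fin n) (Fin n) ℂ) : Prop :=
  (B - A).PosSemidef

/-- The convention `0 · f(γ/0) := lim_{ε↓0} ε f(γ/ε)` (as a limsup, so that it is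
always defined; for convex `f` the limit exists and coincides with it). -/
def zeroMulConv (f : ℝ → EReal) (γ : ℝ) : EReal :=
  Filter.limsup (fun ε : ℝ => (ε : EReal) * f (γ / ε)) (𝓝[>] (0 : ℝ))

/-- Lift of a real valued function to `EReal` values. -/
def toE (f : ℝ → ℝ) : ℝ → EReal := fun y => ((f y : ℝ) : EReal)

/-- Classical `f`-divergence `D_f(p‖q) = ∑_x q(x) f(p(x)/q(x))`, with the convention
`0 · f(γ/0) := lim_{ε↓0} ε f(γ/ε)`. -/
def DfFinset (f : ℝ → EReal) {α : Type*} (X : Finset α) (p q : α → ℝ) : EReal :=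
  ∑ x ∈ X, if q x = 0 then zeroMulConv f (p x) else (q x : EReal) * f (p x / q x)

/-- A reverse test of `(ρ, σ)`: trace-one positive semidefinite matrices `Γ x`
and nonnegative weights `p, q` with `∑ p x • Γ x = ρ` and `∑ q x • Γ x = σ`. -/
def IsReverseTest {n k : ℕ} (ρ σ : Matrix (Fin n) (Fin n) ℂ)
    (Γ : Fin k → Matrix (Fin n) (Fin n) ℂ) (p q : Fin k → ℝ) : Prop :=
  (∀ x, (Γ x).PosSemidef) ∧ (∀ x, (Γ x).trace = 1) ∧ (∀ x, 0 ≤ p x) ∧ (∀ x, 0 ≤ q x) ∧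
    ∑ x, (p x : ℂ) • Γ x = ρ ∧ ∑ x, (q x : ℂ) • Γ x = σ

/-- Maximal `f`-divergence: infimum of `D_f(p‖q)` over all reverse tests of `(ρ,σ)`. -/
def DfMax (f : ℝ → EReal) {n : ℕ} (ρ σ : Matrix (Fin n) (Fin n) ℂ) : EReal :=
  ⨅ (k : ℕ) (Γ : Fin k → Matrix (Fin n) (Fin n) ℂ) (p : Fin k → ℝ) (q : Fin k → ℝ)
    (_ : IsReverseTest ρ σ Γ p q), DfFinset f Finset.univ p q

/-- Condition (FC): `f` is a proper closed convex function on `[0,∞)` with values in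
`ℝ ∪ {+∞}` and `f 0 = 0`. -/
structure IsFC (f : ℝ → EReal) : Prop where
  zero : f 0 = 0
  ne_bot : ∀ y : ℝ, 0 ≤ y → f y ≠ ⊥
  convex : ∀ ⦃y z : ℝ⦄, 0 ≤ y → 0 ≤ z → ∀ ⦃t : ℝ⦄, 0 ≤ t → t ≤ 1 →
    f (t * y + (1 - t) * z) ≤ (t : EReal) * f y + ((1 - t : ℝ) : EReal) * f z
  lsc : LowerSemicontinuousOn f (Set.Ici 0)

/-- A density matrix: positive semidefinite with trace one. -/
def IsDensity {n : ℕ} (ρ : Matrix (Fin n) (Fin n) ℂ) : Prop :=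
  ρ.PosSemidef ∧ ρ.trace = 1

/-- Trace preserving positive linear map. -/
def IsTPP {n m : ℕ} (Λ : Matrix (Fin n) (Fin n) ℂ →ₗ[ℂ] Matrix (Fin m) (Fin m) ℂ) : Prop :=
  (∀ A : Matrix (Fin n) (Fin n) ℂ, A.PosSemidef → (Λ A).PosSemidef) ∧
  (∀ A : Matrix (Fin n) (Fin n) ℂ, (Λ A).trace = A.trace)

/-- CPTP map: trace preserving, and `Λ ⊗ id_k` is positive for every `k`. -/
def IsCPTP {n m : ℕ} (Λ : Matrix (Fin n) (Fin n) ℂ →ₗ[ℂ] Matrix (Fin m) (Fin m) ℂ) : Prop :=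
  (∀ A : Matrix (Fin n) (Fin n) ℂ, (Λ A).trace = A.trace) ∧
  ∀ (k : ℕ) (M : Matrix (Fin n × Fin k) (Fin n × Fin k) ℂ), M.PosSemidef →
    (Matrix.of (fun i j : Fin m × Fin k =>
      Λ (Matrix.of fun r s => M (r, i.2) (s, j.2)) i.1 j.1)).PosSemidef

/-- The map `Λ_σ(Z) = Λ(σ)^{-1/2} Λ(σ^{1/2} Z σ^{1/2}) Λ(σ)^{-1/2}`. -/
def lamSigma {n m : ℕ} (Λ : Matrix (Fin n) (Fin n) ℂ →ₗ[ℂ] Matrix (Fin m) (Fin m) ℂ)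
    (σ Z : Matrix (Fin n) (Fin n) ℂ) : Matrix (Fin m) (Fin m) ℂ :=
  pinvSqrt (Λ σ) * Λ (sqrtm σ * Z * sqrtm σ) * pinvSqrt (Λ σ)

/-- Condition (F): `f : [0,∞) → ℝ` continuous, `f 0 = 0`, operator convex. -/
def IsOpConvexF (f : ℝ → ℝ) : Prop :=
  ContinuousOn f (Set.Ici 0) ∧ f 0 = 0 ∧
  ∀ (k : ℕ) (A B : Matrix (Fin k) (Fin k) ℂ), A.PosSemidef → B.PosSemidef →
    ∀ t : ℝ, 0 ≤ t → t ≤ 1 →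
      LoewnerLE (matFun f (t • A + (1 - t) • B)) (t • matFun f A + (1 - t) • matFun f B)

/-- The quantity `D'_f(ρ‖σ)`. -/
def DfPrime (f : ℝ → ℝ) {n : ℕ} (ρ σ : Matrix (Fin n) (Fin n) ℂ) : EReal :=
  if suppLE ρ σ then ((((σ * matFun f (dRN ρ σ)).trace.re : ℝ)) : EReal)
  else sInf { D : EReal | ∃ ρ₁ : Matrix (Fin n) (Fin n) ℂ,
    ρ₁.PosSemidef ∧ LoewnerLE ρ₁ ρ ∧ suppLE ρ₁ σ ∧
    D = ((((σ * matFun f (dRN ρ₁ σ)).trace.re : ℝ)) : EReal)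
        + zeroMulConv (toE f) (1 - ρ₁.trace.re) }

/-- Spectral projection of a Hermitian matrix onto the eigenvalue `c`. -/
def eigProj {n : ℕ} (A : Matrix (Fin n) (Fin n) ℂ) (c : ℝ) : Matrix (Fin n) (Fin n) ℂ :=
  matFun (fun x => if x = c then 1 else 0) A

/-- The (real) spectrum of a Hermitian matrix. -/
def matSpec {n : ℕ} (A : Matrix (Fin n) (Fin n) ℂ) : Set ℝ := {c | eigProj A c ≠ 0}

/-- weights `q` of the minimal reverse test (dominated case): `q(x) = tr[σ P_x]`. -/
def mrtQ {n : ℕ} (ρ σ : Matrix (Fin n) (Fin n) ℂ) (c : ℝ) : ℝ :=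
  ((σ * eigProj (dRN ρ σ) c).trace).re

/-- weights `p` of the minimal reverse test (dominated case): `p(x) = d_x q(x)`. -/
def mrtP {n : ℕ} (ρ σ : Matrix (Fin n) (Fin n) ℂ) (c : ℝ) : ℝ := c * mrtQ ρ σ c

/-- states of the minimal reverse test (dominated case): `Γ_x = σ^{1/2} P_x σ^{1/2} / q(x)`. -/
def mrtGamma {n : ℕ} (ρ σ : Matrix (Fin n) (Fin n) ℂ) (c : ℝ) : Matrix (Fin n) (Fin n) ℂ :=
  (mrtQ ρ σ c)⁻¹ • (sqrtm σ * eigProj (dRN ρ σ) c * sqrtm σ)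

/-- index set of the minimal reverse test (dominated case): the distinct eigenvalues of
`d(ρ,σ)` carrying positive weight. -/
def mrtX {n : ℕ} (ρ σ : Matrix (Fin n) (Fin n) ℂ) : Finset ℝ :=
  if h : (dRN ρ σ).IsHermitian then
    (Finset.univ.image h.eigenvalues).filter (fun c => mrtQ ρ σ c ≠ 0)
  else ∅

/-- `ρ̃ = ρ₁₁ − ρ₁₂ ρ₂₂⁻ ρ₂₁` (blocks w.r.t. the support projection of `σ`). -/
def rhoTilde {n : ℕ} (ρ σ : Matrix (Fin n) (Fin n) ℂ) : Matrix (Fin n) (Fin n) ℂ :=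
  suppProj σ * ρ * suppProj σ -
    (suppProj σ * ρ * (1 - suppProj σ)) *
      mpinv ((1 - suppProj σ) * ρ * (1 - suppProj σ)) *
        ((1 - suppProj σ) * ρ * suppProj σ)

/-- `ρ` itself if `supp ρ ⊆ supp σ`, and `ρ̃` otherwise. -/
def domPart {n : ℕ} (ρ σ : Matrix (Fin n) (Fin n) ℂ) : Matrix (Fin n) (Fin n) ℂ :=
  if suppLE ρ σ then ρ else rhoTilde ρ σ

/-- Index set of the minimal reverse test of `(ρ,σ)` (general case); the extra point
`x₀` is encoded as `none`. -/
def mrtXO {n : ℕ} (ρ σ : Matrix (Fin n) (Fin n) ℂ) : Finset (Option ℝ) :=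
  if suppLE ρ σ then (mrtX ρ σ).image some
  else insert none ((mrtX (rhoTilde ρ σ) σ).image some)

/-- weights `q` of the minimal reverse test (general case). -/
def mrtQO {n : ℕ} (ρ σ : Matrix (Fin n) (Fin n) ℂ) : Option ℝ → ℝ
  | none => 0
  | some c => mrtQ (domPart ρ σ) σ c

/-- weights `p` of the minimal reverse test (general case). -/
def mrtPO {n : ℕ} (ρ σ : Matrix (Fin n) (Fin n) ℂ) : Option ℝ → ℝ
  | none => 1 - ((rhoTilde ρ σ).trace).re
  | some c => mrtP (domPart ρ σ) σ c

/-- states of the minimal reverse test (general case). -/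
def mrtGammaO {n : ℕ} (ρ σ : Matrix (Fin n) (Fin n) ℂ) :
    Option ℝ → Matrix (Fin n) (Fin n) ℂ
  | none => ((1 - ((rhoTilde ρ σ).trace).re)⁻¹ : ℝ) • (ρ - rhoTilde ρ σ)
  | some c => mrtGamma (domPart ρ σ) σ c

/-- The recession slope `lim_{y→∞} f(y)/y` of a convex function (as a limsup). -/
def recSlope (f : ℝ → ℝ) : EReal :=
  Filter.limsup (fun y : ℝ => ((f y / y : ℝ) : EReal)) atTop

/-- Support of a Borel measure on `ℝ`. -/
def measSupp (μ : Measure ℝ) : Set ℝ :=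
  {t | ∀ ε : ℝ, 0 < ε → 0 < μ (Set.Ioo (t - ε) (t + ε))}

/-- Löwner representation of an operator convex function:
`f(y) = a y + b y² + ∫ (y/(1+t) − y/(y+t)) dμ(t)` with `b ≥ 0` and `μ` a nonnegative
Borel measure on `(0,∞)` with `∫ (1+t)⁻² dμ(t) < ∞`. -/
def IsLownerRep (f : ℝ → ℝ) (a b : ℝ) (μ : Measure ℝ) : Prop :=
  0 ≤ b ∧ μ (Set.Iic 0) = 0 ∧ Integrable (fun t : ℝ => ((1 + t) ^ 2)⁻¹) μ ∧
    ∀ y : ℝ, 0 ≤ y → f y = a * y + b * y ^ 2 + ∫ t, (y / (1 + t) - y / (y + t)) ∂μ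

section Helper13

open Matrix

variable {n : ℕ} {A B : Matrix (Fin n) (Fin n) ℂ}

lemma matFun_eq (hA : A.IsHermitian) (g : ℝ → ℝ) :
    matFun g A = (hA.eigenvectorUnitary : Matrix (Fin n) (Fin n) ℂ) *
      Matrix.diagonal (fun i => (g (hA.eigenvalues i) : ℂ)) *
      star (hA.eigenvectorUnitary : Matrix (Fin n) (Fin n) ℂ) := dif_pos hA

lemma star_mul_self_eigU (hA : A.IsHermitian) :
    star (hA.eigenvectorUnitary : Matrix (Fin n) (Fin n) ℂ) *
      (hA.eigenvectorUnitary : Matrix (Fin n) (Fin n) ℂ) = 1 :=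
  Matrix.mem_unitaryGroup_iff'.mp hA.eigenvectorUnitary.2

lemma mul_star_self_eigU (hA : A.IsHermitian) :
    (hA.eigenvectorUnitary : Matrix (Fin n) (Fin n) ℂ) *
      star (hA.eigenvectorUnitary : Matrix (Fin n) (Fin n) ℂ) = 1 :=
  Matrix.mem_unitaryGroup_iff.mp hA.eigenvectorUnitary.2

lemma matFun_mul (hA : A.IsHermitian) (g h : ℝ → ℝ) :
    matFun g A * matFun h A = matFun (fun x => g x * h x) A := by
  rw [matFun_eq hA g, matFun_eq hA h, matFun_eq hA (fun x => g x * h x)]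
  set U := (hA.eigenvectorUnitary : Matrix (Fin n) (Fin n) ℂ) with hU
  have h1 : star U * U = 1 := star_mul_self_eigU hA
  have : (U * Matrix.diagonal (fun i => (g (hA.eigenvalues i) : ℂ)) * star U) *
        (U * Matrix.diagonal (fun i => (h (hA.eigenvalues i) : ℂ)) * star U)
      = U * ((Matrix.diagonal (fun i => (g (hA.eigenvalues i) : ℂ)) *
          Matrix.diagonal (fun i => (h (hA.eigenvalues i) : ℂ))) * star U) := by
    simp only [Matrix.mul_assoc]
    rw [← Matrix.mul_assoc (star U) U, h1, one_mul]
  rw [this, Matrix.diagonal_mul_diagonal, ← Matrix.mul_assoc]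
  congr 2
  ext i
  push_cast
  ring

lemma matFun_congr (hA : A.IsHermitian) {g h : ℝ → ℝ}
    (hgh : ∀ i, g (hA.eigenvalues i) = h (hA.eigenvalues i)) :
    matFun g A = matFun h A := by
  have he : (fun i => ((g (hA.eigenvalues i) : ℝ) : ℂ)) =
      fun i => ((h (hA.eigenvalues i) : ℝ) : ℂ) := funext fun i => by rw [hgh i]
  rw [matFun_eq hA g, matFun_eq hA h, he]

lemma matFun_id (hA : A.IsHermitian) : matFun (fun x => x) A = A := by
  rw [matFun_eq hA]
  exact hA.spectral_theorem.symm

lemma matFun_one (hA : A.IsHermitian) : matFun (fun _ => (1 : ℝ)) A = 1 := by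
  rw [matFun_eq hA]
  simp [mul_star_self_eigU hA]

lemma matFun_isHermitian (hA : A.IsHermitian) (g : ℝ → ℝ) :
    (matFun g A).IsHermitian := by
  have hd : (Matrix.diagonal (fun i => (g (hA.eigenvalues i) : ℂ))).IsHermitian :=
    Matrix.isHermitian_diagonal_of_self_adjoint _ (funext fun i => Complex.conj_ofReal _)
  rw [matFun_eq hA g, Matrix.star_eq_conjTranspose]
  exact Matrix.isHermitian_mul_mul_conjTranspose _ hd

lemma matFun_posSemidef (hA : A.IsHermitian) {g : ℝ → ℝ}
    (hg : ∀ i, 0 ≤ g (hA.eigenvalues i)) : (matFun g A).PosSemidef := by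
  rw [matFun_eq hA g, Matrix.star_eq_conjTranspose]
  exact (Matrix.PosSemidef.diagonal fun i => by
    simpa using Complex.real_le_real.mpr (hg i)).mul_mul_conjTranspose_same _

lemma trace_mul_matFun (hA : A.IsHermitian) (g : ℝ → ℝ) (B : Matrix (Fin n) (Fin n) ℂ) :
    (B * matFun g A).trace = ∑ i, (star (hA.eigenvectorUnitary : Matrix (Fin n) (Fin n) ℂ)
      * B * (hA.eigenvectorUnitary : Matrix (Fin n) (Fin n) ℂ)) i i * (g (hA.eigenvalues i) : ℂ) := by
  rw [matFun_eq hA g]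
  set U := (hA.eigenvectorUnitary : Matrix (Fin n) (Fin n) ℂ) with hU
  set D := Matrix.diagonal (fun i => (g (hA.eigenvalues i) : ℂ)) with hD
  have : B * (U * D * star U) = (B * U * D) * star U := by simp only [Matrix.mul_assoc]
  rw [this, Matrix.trace_mul_comm, ← Matrix.mul_assoc, ← Matrix.mul_assoc]
  simp [Matrix.trace, Matrix.diag, hD, Matrix.mul_diagonal]

lemma psd_trace_eq_zero (hA : A.PosSemidef) (h : A.trace = 0) : A = 0 := by
  have hH := hA.1
  have htr : A.trace = ∑ i, (hH.eigenvalues i : ℂ) := by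
    conv_lhs => rw [hH.spectral_theorem, Unitary.conjStarAlgAut_apply]
    rw [Matrix.trace_mul_comm, ← Matrix.mul_assoc, star_mul_self_eigU hH, one_mul]
    simp [Matrix.trace, Matrix.diag, Function.comp]
  rw [htr] at h
  have h2 : ∑ i, hH.eigenvalues i = 0 := by
    have := congrArg Complex.re h
    simpa using this
  have h3 : ∀ i, hH.eigenvalues i = 0 := by
    intro i
    have := (Finset.sum_eq_zero_iff_of_nonneg (fun i _ => hA.eigenvalues_nonneg i)).mp h2
    exact this i (Finset.mem_univ i)
  have h4 : A = matFun (fun x => x) A := (matFun_id hH).symm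
  rw [h4, matFun_eq hH]
  have : (Matrix.diagonal (fun i => ((hH.eigenvalues i : ℝ) : ℂ))) = 0 := by
    ext i j
    by_cases hij : i = j <;> simp [Matrix.diagonal, hij, h3]
  rw [this, Matrix.mul_zero, Matrix.zero_mul]

end Helper13
section Helper13b

open Matrix

variable {n : ℕ} {A B : Matrix (Fin n) (Fin n) ℂ}

lemma ext_of_mulVec (h : ∀ v, A *ᵥ v = B *ᵥ v) : A = B := by
  ext i j
  have := congrFun (h (Pi.single j 1)) i
  simpa [Matrix.mulVec_single] using this

lemma psd_dot_eq_re (hA : A.PosSemidef) (v : Fin n → ℂ) :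
    star v ⬝ᵥ A *ᵥ v = (((star v ⬝ᵥ A *ᵥ v).re : ℝ) : ℂ) := by
  have h := hA.dotProduct_mulVec_nonneg v
  rw [Complex.nonneg_iff] at h
  apply Complex.ext
  · simp
  · simpa using h.2.symm

lemma suppLE_of_ker (hA : A.IsHermitian) (hB : B.IsHermitian)
    (h : ∀ v, B *ᵥ v = 0 → A *ᵥ v = 0) : suppLE A B := by
  classical
  set TA := Matrix.toEuclideanLin A with hTA
  set TB := Matrix.toEuclideanLin B with hTB
  have hker : LinearMap.ker TB ≤ LinearMap.ker TA := by
    intro x hx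
    rw [LinearMap.mem_ker] at hx ⊢
    have hx' : B *ᵥ (WithLp.equiv 2 (Fin n → ℂ) x) = 0 := by
      have := congrArg (WithLp.equiv 2 (Fin n → ℂ)) hx
      exact this
    apply (WithLp.equiv 2 (Fin n → ℂ)).injective
    exact h _ hx'
  have hrange : ∀ (T : EuclideanSpace ℂ (Fin n) →ₗ[ℂ] EuclideanSpace ℂ (Fin n)),
      T.IsSymmetric → LinearMap.range T = (LinearMap.ker T)ᗮ := by
    intro T hT
    apply Submodule.eq_of_le_of_finrank_eq
    · rintro x ⟨y, rfl⟩
      rw [Submodule.mem_orthogonal]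
      intro u hu
      rw [LinearMap.mem_ker] at hu
      rw [← hT u y, hu, inner_zero_left]
    · have h1 := LinearMap.finrank_range_add_finrank_ker T
      have h2 := Submodule.finrank_add_finrank_orthogonal (K := LinearMap.ker T)
      omega
  have hsymA : TA.IsSymmetric := (Matrix.isHermitian_iff_isSymmetric).1 hA
  have hsymB : TB.IsSymmetric := (Matrix.isHermitian_iff_isSymmetric).1 hB
  have hle : LinearMap.range TA ≤ LinearMap.range TB := by
    rw [hrange TA hsymA, hrange TB hsymB]
    exact Submodule.orthogonal_le hker
  intro x hx
  obtain ⟨v, hv⟩ := hx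
  rw [Matrix.mulVecLin_apply] at hv
  have hmem : TA ((WithLp.equiv 2 (Fin n → ℂ)).symm v) ∈ LinearMap.range TA :=
    LinearMap.mem_range_self _ _
  obtain ⟨w, hw⟩ := hle hmem
  refine ⟨WithLp.equiv 2 (Fin n → ℂ) w, ?_⟩
  rw [Matrix.mulVecLin_apply]
  have hw2 : B *ᵥ (WithLp.equiv 2 (Fin n → ℂ)) w = A *ᵥ v :=
    (WithLp.equiv 2 (Fin n → ℂ)).symm.injective (by
      exact hw)
  rw [hw2, hv]

lemma mulVec_eq_zero_of_suppLE (hA : A.PosSemidef) (hB : B.IsHermitian)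
    (h : suppLE A B) {v : Fin n → ℂ} (hv : B *ᵥ v = 0) : A *ᵥ v = 0 := by
  obtain ⟨w, hw⟩ := h (LinearMap.mem_range_self A.mulVecLin v)
  rw [Matrix.mulVecLin_apply, Matrix.mulVecLin_apply] at hw
  rw [← (hA.dotProduct_mulVec_zero_iff v)]
  rw [← hw, Matrix.dotProduct_mulVec]
  have hz : star v ᵥ* B = 0 := by
    have hsm : star (B *ᵥ v) = star v ᵥ* Bᴴ := Matrix.star_mulVec B v
    rw [hv, hB] at hsm
    simpa using hsm.symm
  rw [hz, zero_dotProduct]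

lemma not_suppLE_exists (hA : A.IsHermitian) (hB : B.IsHermitian) (h : ¬ suppLE A B) :
    ∃ v, B *ᵥ v = 0 ∧ A *ᵥ v ≠ 0 := by
  by_contra hc
  push_neg at hc
  exact h (suppLE_of_ker hA hB fun v hv => hc v hv)

end Helper13b
section Helper13c

open Matrix

lemma dot_single {m : ℕ} (M : Matrix (Fin m) (Fin m) ℂ) (i : Fin m) :
    star (Pi.single i 1 : Fin m → ℂ) ⬝ᵥ M *ᵥ (Pi.single i 1) = M i i := by
  simp [dotProduct, Matrix.mulVec_single, Pi.single_apply, apply_ite]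

lemma matFun_one_dim (g : ℝ → ℝ) {A : Matrix (Fin 1) (Fin 1) ℂ} (hA : A.IsHermitian) :
    matFun g A = Matrix.of (fun _ _ => (g ((A 0 0).re) : ℂ)) := by
  set U := (hA.eigenvectorUnitary : Matrix (Fin 1) (Fin 1) ℂ) with hU
  have h2 : U * star U = 1 := mul_star_self_eigU hA
  have hkey : U 0 0 * (starRingEnd ℂ) (U 0 0) = 1 := by
    have := congrFun (congrFun h2 0) 0
    simpa [Matrix.mul_apply, Fin.sum_univ_one, Matrix.star_apply, Matrix.one_apply] using this
  have hA00 : A 0 0 = (hA.eigenvalues 0 : ℂ) := by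
    conv_lhs => rw [hA.spectral_theorem, Unitary.conjStarAlgAut_apply]
    simp only [Matrix.mul_apply, Fin.sum_univ_one, Matrix.diagonal_apply_eq,
      Matrix.star_apply, Function.comp]
    have : U 0 0 * (RCLike.ofReal (hA.eigenvalues 0) : ℂ) * star (U 0 0)
        = (hA.eigenvalues 0 : ℂ) * (U 0 0 * (starRingEnd ℂ) (U 0 0)) := by
      simp [RCLike.star_def]; ring
    rw [this, hkey, mul_one]
  have hre : (A 0 0).re = hA.eigenvalues 0 := by rw [hA00]; simp
  ext i j
  have hi : i = 0 := Subsingleton.elim i 0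
  have hj : j = 0 := Subsingleton.elim j 0
  subst hi hj
  rw [matFun_eq hA g]
  simp only [Matrix.mul_apply, Fin.sum_univ_one, Matrix.diagonal_apply_eq, Matrix.star_apply,
    Matrix.of_apply, hre]
  have : U 0 0 * (g (hA.eigenvalues 0) : ℂ) * star (U 0 0)
      = (g (hA.eigenvalues 0) : ℂ) * (U 0 0 * (starRingEnd ℂ) (U 0 0)) := by
    simp [RCLike.star_def]; ring
  rw [this, hkey, mul_one]

lemma convexOn_of_opConvexF {f : ℝ → ℝ} (hf : IsOpConvexF f) : ConvexOn ℝ (Set.Ici 0) f := by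
  refine ⟨convex_Ici 0, ?_⟩
  intro a ha b hb s t hs ht hst
  have ht' : t = 1 - s := by linarith
  subst ht'
  have hs1 : s ≤ 1 := by linarith
  set A : Matrix (Fin 1) (Fin 1) ℂ := Matrix.diagonal (fun _ => (a : ℂ)) with hAdef
  set B : Matrix (Fin 1) (Fin 1) ℂ := Matrix.diagonal (fun _ => (b : ℂ)) with hBdef
  have hApsd : A.PosSemidef := Matrix.PosSemidef.diagonal
    (fun _ => by simpa using Complex.real_le_real.mpr ha.out)
  have hBpsd : B.PosSemidef := Matrix.PosSemidef.diagonal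
    (fun _ => by simpa using Complex.real_le_real.mpr hb.out)
  have hC : s • A + (1 - s) • B
      = Matrix.diagonal (fun _ => ((s * a + (1 - s) * b : ℝ) : ℂ)) := by
    ext i j
    by_cases hij : i = j
    · subst hij
      simp only [hAdef, hBdef, Matrix.add_apply, Matrix.smul_apply, Matrix.diagonal_apply_eq,
        Complex.real_smul]
      push_cast
      ring
    · simp [hAdef, hBdef, Matrix.diagonal_apply_ne _ hij]
  have hL := hf.2.2 1 A B hApsd hBpsd s hs hs1
  have h00 := Matrix.PosSemidef.dotProduct_mulVec_nonneg hL (Pi.single 0 1)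
  rw [dot_single] at h00
  rw [Complex.nonneg_iff] at h00
  have hCh : (s • A + (1 - s) • B).IsHermitian := by
    rw [hC]
    exact Matrix.isHermitian_diagonal_of_self_adjoint _
      (funext fun i => Complex.conj_ofReal _)
  rw [matFun_one_dim f hApsd.1, matFun_one_dim f hBpsd.1, matFun_one_dim f hCh] at h00
  have e1 : (A 0 0).re = a := by simp [hAdef]
  have e2 : (B 0 0).re = b := by simp [hBdef]
  have e3 : ((s • A + (1 - s) • B) 0 0).re = s * a + (1 - s) * b := by
    rw [hC]; simp
  rw [e1, e2, e3] at h00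
  have := h00.1
  simp only [Matrix.sub_apply, Matrix.add_apply, Matrix.smul_apply, Matrix.of_apply,
    Complex.sub_re, Complex.add_re, Complex.real_smul, Complex.mul_re, Complex.ofReal_re,
    Complex.ofReal_im] at this
  simp only [smul_eq_mul]
  linarith

lemma exists_affine_minorant {f : ℝ → ℝ} (hcvx : ConvexOn ℝ (Set.Ici 0) f)
    (hcont : ContinuousOn f (Set.Ici 0)) :
    ∃ α β : ℝ, ∀ y, 0 ≤ y → α * y + β ≤ f y := by
  obtain ⟨y₀, hy₀mem, hy₀min⟩ := isCompact_Icc.exists_isMinOn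
    (Set.nonempty_Icc.mpr (by norm_num : (0:ℝ) ≤ 2))
    (hcont.mono (fun x hx => hx.1))
  set m := f y₀ with hm
  set α := f 2 - f 1 with hα
  refine ⟨α, min (2 * f 1 - f 2) (m - 2 * |α|), ?_⟩
  intro y hy
  by_cases hy2 : y ≤ 2
  · have hfy : m ≤ f y := (isMinOn_iff.mp hy₀min) y ⟨hy, hy2⟩
    have h1 : α * y ≤ |α| * y :=
      mul_le_mul_of_nonneg_right (le_abs_self α) hy
    have h2 : |α| * y ≤ |α| * 2 := mul_le_mul_of_nonneg_left hy2 (abs_nonneg α)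
    have h3 : min (2 * f 1 - f 2) (m - 2 * |α|) ≤ m - 2 * |α| := min_le_right _ _
    linarith
  · push_neg at hy2
    have h1 : (0:ℝ) < y - 1 := by linarith
    set θ := (y - 2) / (y - 1) with hθ
    have hθ0 : 0 ≤ θ := div_nonneg (by linarith) h1.le
    have hθc : 1 - θ = 1 / (y - 1) := by
      rw [hθ, eq_div_iff (ne_of_gt h1), sub_mul, div_mul_cancel₀ _ (ne_of_gt h1)]
      ring
    have hθ1 : 0 ≤ 1 - θ := by rw [hθc]; positivity
    have hcomb := hcvx.2 (Set.mem_Ici.mpr (by norm_num : (0:ℝ) ≤ 1))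
      (Set.mem_Ici.mpr hy) hθ0 hθ1 (by ring)
    have harg : θ • (1:ℝ) + (1 - θ) • y = 2 := by
      simp only [smul_eq_mul, mul_one]
      rw [hθ]
      field_simp
      ring
    rw [harg] at hcomb
    simp only [smul_eq_mul] at hcomb
    -- hcomb : f 2 ≤ θ * f 1 + (1 - θ) * f y
    have h4 : f 2 * (y - 1) ≤ (y - 2) * f 1 + f y := by
      have h5 := mul_le_mul_of_nonneg_right hcomb h1.le
      rw [add_mul, hθc, hθ] at h5
      have e : (y - 2) / (y - 1) * f 1 * (y - 1) = (y - 2) * f 1 := by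
        rw [div_mul_eq_mul_div, div_mul_eq_mul_div, div_eq_iff (ne_of_gt h1)]
      have e2 : 1 / (y - 1) * f y * (y - 1) = f y := by
        rw [div_mul_eq_mul_div, div_mul_eq_mul_div, div_eq_iff (ne_of_gt h1)]
        ring
      rw [e, e2] at h5
      exact h5
    have h6 : min (2 * f 1 - f 2) (m - 2 * |α|) ≤ 2 * f 1 - f 2 := min_le_left _ _
    have h7 : α * y + (2 * f 1 - f 2) ≤ f y := by
      rw [hα]; nlinarith [h4]
    linarith

lemma zeroMulConv_eq_top {f : ℝ → ℝ} (hlim : Tendsto (fun y : ℝ => f y / y) atTop atTop)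
    {γ : ℝ} (hγ : 0 < γ) : zeroMulConv (toE f) γ = ⊤ := by
  apply Filter.Tendsto.limsup_eq
  have h1 : Tendsto (fun ε : ℝ => γ / ε) (𝓝[>] (0:ℝ)) atTop := by
    have h2 := Filter.Tendsto.const_mul_atTop hγ (tendsto_inv_nhdsGT_zero (𝕜 := ℝ))
    simpa [div_eq_mul_inv] using h2
  have h2 : Tendsto (fun ε : ℝ => γ * (f (γ/ε) / (γ/ε))) (𝓝[>] (0:ℝ)) atTop :=
    Filter.Tendsto.const_mul_atTop hγ (hlim.comp h1)
  have h3 : Tendsto (fun ε : ℝ => ε * f (γ/ε)) (𝓝[>] (0:ℝ)) atTop := by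
    apply h2.congr'
    filter_upwards [self_mem_nhdsWithin] with ε hε
    have hε0 : (ε:ℝ) ≠ 0 := ne_of_gt hε
    field_simp
  rw [EReal.tendsto_nhds_top_iff_real]
  intro x
  filter_upwards [h3.eventually_gt_atTop x] with ε hε
  calc ((x:ℝ):EReal) < ((ε * f (γ/ε) : ℝ) : EReal) := by exact_mod_cast hε
    _ = (ε : EReal) * toE f (γ/ε) := by rw [EReal.coe_mul]; rfl

lemma zeroMulConv_zero {f : ℝ → ℝ} (hf0 : f 0 = 0) : zeroMulConv (toE f) 0 = 0 := by
  unfold zeroMulConv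
  have h : ∀ᶠ ε : ℝ in 𝓝[>] (0:ℝ), (ε : EReal) * toE f (0 / ε) = (0:EReal) := by
    filter_upwards [self_mem_nhdsWithin] with ε hε
    have : (0:ℝ) / ε = 0 := zero_div ε
    rw [this]
    have : toE f 0 = (0:EReal) := by simp [toE, hf0]
    rw [this, mul_zero]
  rw [Filter.limsup_congr h, Filter.limsup_const]

lemma ereal_sum_ne_bot {α : Type*} {s : Finset α} {g : α → EReal} (h : ∀ x ∈ s, g x ≠ ⊥) :
    ∑ x ∈ s, g x ≠ ⊥ := by
  classical
  induction s using Finset.induction_on with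
  | empty => simp
  | insert _ _ hx ih =>
    rw [Finset.sum_insert hx]
    rw [Ne, EReal.add_eq_bot_iff]
    push_neg
    exact ⟨h _ (Finset.mem_insert_self _ _),
      ih fun x hxs => h x (Finset.mem_insert_of_mem hxs)⟩

lemma ereal_sum_eq_top {α : Type*} {s : Finset α} {g : α → EReal} (h : ∀ x ∈ s, g x ≠ ⊥)
    {x₀ : α} (hx₀ : x₀ ∈ s) (htop : g x₀ = ⊤) : ∑ x ∈ s, g x = ⊤ := by
  classical
  rw [← Finset.add_sum_erase s g hx₀, htop]
  exact EReal.top_add_of_ne_bot (ereal_sum_ne_bot fun x hx => h x (Finset.mem_of_mem_erase hx))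

end Helper13c
section Helper13d

open Matrix

variable {n : ℕ}

lemma key_lower_bound {f : ℝ → ℝ} (hcvx : ConvexOn ℝ (Set.Ici 0) f)
    {α β : ℝ} (hαβ : ∀ y, 0 ≤ y → α * y + β ≤ f y)
    {ρ σ' : Matrix (Fin n) (Fin n) ℂ} (hρ : ρ.PosSemidef) (htr : ρ.trace = 1)
    (hσ' : σ'.PosSemidef) (hle : suppLE ρ σ') (v : Fin n → ℂ)
    (hv1 : star v ⬝ᵥ v = 1)
    (hεpos : 0 < (star v ⬝ᵥ σ' *ᵥ v).re) :
    (star v ⬝ᵥ σ' *ᵥ v).re * f ((star v ⬝ᵥ ρ *ᵥ v).re / (star v ⬝ᵥ σ' *ᵥ v).re)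
      + α * (1 - (star v ⬝ᵥ ρ *ᵥ v).re) + β * (σ'.trace.re - (star v ⬝ᵥ σ' *ᵥ v).re)
      ≤ (σ' * matFun f (dRN ρ σ')).trace.re := by
  classical
  have hσh : σ'.IsHermitian := hσ'.1
  set ε := (star v ⬝ᵥ σ' *ᵥ v).re with hεdef
  set c := (star v ⬝ᵥ ρ *ᵥ v).re with hcdef
  set S := sqrtm σ' with hSdef
  set S' := pinvSqrt σ' with hS'def
  have hSh : S.IsHermitian := matFun_isHermitian hσh _
  have hS'h : S'.IsHermitian := matFun_isHermitian hσh _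
  set ind : ℝ → ℝ := fun x => if x = 0 then 0 else 1 with hind
  have hSS : S * S = σ' := by
    rw [hSdef]
    show matFun Real.sqrt σ' * matFun Real.sqrt σ' = σ'
    rw [matFun_mul hσh]
    rw [matFun_congr hσh (g := fun x => Real.sqrt x * Real.sqrt x) (h := fun x => x)
      (fun i => Real.mul_self_sqrt (hσ'.eigenvalues_nonneg i))]
    exact matFun_id hσh
  have hSS' : S * S' = matFun ind σ' := by
    rw [hSdef, hS'def]
    show matFun Real.sqrt σ' * matFun (fun x => (Real.sqrt x)⁻¹) σ' = _
    rw [matFun_mul hσh]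
    apply matFun_congr hσh
    intro i
    rcases eq_or_lt_of_le (hσ'.eigenvalues_nonneg i) with h0 | hpos
    · rw [← h0]; simp [hind]
    · have : Real.sqrt (hσh.eigenvalues i) ≠ 0 :=
        ne_of_gt (Real.sqrt_pos.mpr hpos)
      simp [hind, mul_inv_cancel₀ this, ne_of_gt hpos]
  have hS'S : S' * S = matFun ind σ' := by
    rw [hSdef, hS'def]
    show matFun (fun x => (Real.sqrt x)⁻¹) σ' * matFun Real.sqrt σ' = _
    rw [matFun_mul hσh]
    apply matFun_congr hσh
    intro i
    rcases eq_or_lt_of_le (hσ'.eigenvalues_nonneg i) with h0 | hpos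
    · rw [← h0]; simp [hind]
    · have : Real.sqrt (hσh.eigenvalues i) ≠ 0 :=
        ne_of_gt (Real.sqrt_pos.mpr hpos)
      simp [hind, inv_mul_cancel₀ this, ne_of_gt hpos]
  have hPσ : matFun ind σ' * σ' = σ' := by
    have e0 : matFun ind σ' * matFun (fun x => x) σ' = matFun (fun x => ind x * x) σ' :=
      matFun_mul hσh _ _
    rw [matFun_id hσh] at e0
    rw [e0]
    rw [matFun_congr hσh (g := fun x => ind x * x) (h := fun x => x) (fun i => by
      by_cases h : hσh.eigenvalues i = 0 <;> simp [hind, h])]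
    exact matFun_id hσh
  have hPρ : matFun ind σ' * ρ = ρ := by
    apply ext_of_mulVec
    intro w
    rw [← Matrix.mulVec_mulVec]
    obtain ⟨z, hz⟩ := hle (LinearMap.mem_range_self ρ.mulVecLin w)
    simp only [Matrix.mulVecLin_apply] at hz
    rw [← hz, Matrix.mulVec_mulVec, hPσ]
  have hρP : ρ * matFun ind σ' = ρ := by
    have h1 := congrArg Matrix.conjTranspose hPρ
    rw [Matrix.conjTranspose_mul, (matFun_isHermitian hσh ind), hρ.1] at h1
    exact h1
  set X := dRN ρ σ' with hXdef
  have hXeq : X = S' * ρ * S' := rfl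
  have hXpsd : X.PosSemidef := by
    have h2 := hρ.mul_mul_conjTranspose_same S'
    rw [hS'h] at h2
    exact h2
  have hXh : X.IsHermitian := hXpsd.1
  set U := (hXh.eigenvectorUnitary : Matrix (Fin n) (Fin n) ℂ) with hUdef
  set lam := hXh.eigenvalues with hlamdef
  have hlam : ∀ i, 0 ≤ lam i := hXpsd.eigenvalues_nonneg
  have hUsU : star U * U = 1 := star_mul_self_eigU hXh
  have hUUs : U * star U = 1 := mul_star_self_eigU hXh
  have hSXS : S * X * S = ρ := by
    rw [hXeq]
    have e : S * (S' * ρ * S') * S = (S * S') * ρ * (S' * S) := by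
      simp only [Matrix.mul_assoc]
    rw [e, hSS', hS'S]
    rw [Matrix.mul_assoc, hρP]
    exact hPρ
  -- diagonal weights
  set qc : Fin n → ℂ := fun i => (star U * σ' * U) i i with hqcdef
  set q : Fin n → ℝ := fun i => (qc i).re with hqdef
  have hconj : (star U * σ' * U).PosSemidef := by
    have h2 := hσ'.conjTranspose_mul_mul_same U
    rw [← Matrix.star_eq_conjTranspose] at h2
    exact h2
  have hq0 : ∀ i, 0 ≤ q i := by
    intro i
    have h2 := hconj.dotProduct_mulVec_nonneg (Pi.single i 1)
    rw [dot_single] at h2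
    exact (Complex.nonneg_iff.mp h2).1
  -- trace formula
  have trace_re : ∀ g : ℝ → ℝ, (σ' * matFun g X).trace.re = ∑ i, q i * g (lam i) := by
    intro g
    rw [trace_mul_matFun hXh g σ', Complex.re_sum]
    apply Finset.sum_congr rfl
    intro i _
    simp [Complex.mul_re, hqdef, hqcdef]
    rfl
  have h1 : ∑ i, q i * lam i = 1 := by
    have e0 : matFun (fun x => x) X = X := matFun_id hXh
    have e1 : (σ' * X).trace = 1 := by
      rw [hXeq]
      have e2 : σ' * (S' * ρ * S') = (σ' * S' * ρ) * S' := by simp only [Matrix.mul_assoc]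
      rw [e2, Matrix.trace_mul_comm]
      have e3 : S' * (σ' * S' * ρ) = (S' * σ' * S') * ρ := by simp only [Matrix.mul_assoc]
      rw [e3]
      have e4 : S' * σ' * S' = matFun ind σ' := by
        conv_lhs => rw [← hSS]
        have e5 : S' * (S * S) * S' = (S' * S) * (S * S') := by simp only [Matrix.mul_assoc]
        rw [e5, hS'S, hSS', matFun_mul hσh]
        apply matFun_congr hσh
        intro i
        by_cases h : hσh.eigenvalues i = 0 <;> simp [hind, h]
      rw [e4, hPρ, htr]
    have := trace_re (fun x => x)
    rw [e0, e1] at this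
    simpa using this.symm
  have hsum_q : ∑ i, q i = σ'.trace.re := by
    have := trace_re (fun _ => 1)
    rw [matFun_one hXh, Matrix.mul_one] at this
    simpa using this.symm
  -- the vector u
  set M : Matrix (Fin n) (Fin n) ℂ := star U * S with hMdef
  set u : Fin n → ℂ := M *ᵥ v with hudef
  set nsq : Fin n → ℝ := fun i => Complex.normSq (u i) with hnsqdef
  have hMH : Mᴴ = S * U := by
    rw [hMdef, Matrix.conjTranspose_mul, hSh, Matrix.star_eq_conjTranspose,
      Matrix.conjTranspose_conjTranspose]
  have hMHM : Mᴴ * M = σ' := by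
    rw [hMH, hMdef]
    have e : S * U * (star U * S) = S * (U * star U) * S := by simp only [Matrix.mul_assoc]
    rw [e, hUUs, Matrix.mul_one, hSS]
  have hMMH : M * Mᴴ = star U * σ' * U := by
    rw [hMH, hMdef]
    have e : star U * S * (S * U) = star U * (S * S) * U := by simp only [Matrix.mul_assoc]
    rw [e, hSS]
  have dot_conj : ∀ C : Matrix (Fin n) (Fin n) ℂ,
      star u ⬝ᵥ C *ᵥ u = star v ⬝ᵥ (Mᴴ * C * M) *ᵥ v := by
    intro C
    rw [hudef, Matrix.star_mulVec, Matrix.mulVec_mulVec, Matrix.dotProduct_mulVec,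
      Matrix.vecMul_vecMul, ← Matrix.mul_assoc]
    exact (Matrix.dotProduct_mulVec _ _ _).symm
  have hcz : ∀ z : ℂ, (starRingEnd ℂ) z * z = (Complex.normSq z : ℂ) := fun z => by
    rw [mul_comm, Complex.mul_conj]
  have hsum_nsq : ∑ i, nsq i = ε := by
    have e1 := dot_conj 1
    rw [Matrix.one_mulVec, Matrix.mul_one, hMHM] at e1
    have e2 : star u ⬝ᵥ u = ((∑ i, nsq i : ℝ) : ℂ) := by
      simp only [dotProduct, Pi.star_apply, RCLike.star_def, hcz, hnsqdef]
      push_cast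
      rfl
    rw [e2] at e1
    have := congrArg Complex.re e1
    simpa using this
  have hsum_nsq_lam : ∑ i, nsq i * lam i = c := by
    set D : Matrix (Fin n) (Fin n) ℂ := Matrix.diagonal (fun i => (lam i : ℂ)) with hDdef
    have hUDU : U * D * star U = X := by
      have := matFun_eq hXh (fun x => x)
      rw [matFun_id hXh] at this
      exact this.symm
    have e1 := dot_conj D
    have e2 : Mᴴ * D * M = ρ := by
      rw [hMH, hMdef]
      have e : S * U * D * (star U * S) = S * (U * D * star U) * S := by
        simp only [Matrix.mul_assoc]
      rw [e, hUDU, hSXS]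
    rw [e2] at e1
    have e3 : star u ⬝ᵥ D *ᵥ u = ((∑ i, nsq i * lam i : ℝ) : ℂ) := by
      simp only [dotProduct, Pi.star_apply, RCLike.star_def, hDdef]
      push_cast
      apply Finset.sum_congr rfl
      intro i _
      rw [Matrix.mulVec_diagonal]
      have : (starRingEnd ℂ) (u i) * ((lam i : ℂ) * u i)
          = (lam i : ℂ) * ((starRingEnd ℂ) (u i) * u i) := by ring
      rw [this, hcz]
      push_cast
      ring
    rw [e3] at e1
    have := congrArg Complex.re e1
    simpa using this
  have hvnorm : ∑ i, Complex.normSq (v i) = 1 := by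
    have e2 : star v ⬝ᵥ v = ((∑ i, Complex.normSq (v i) : ℝ) : ℂ) := by
      simp only [dotProduct, Pi.star_apply, RCLike.star_def, hcz]
      push_cast
      rfl
    rw [e2] at hv1
    exact_mod_cast hv1
  have hnsq_le_q : ∀ j, nsq j ≤ q j := by
    intro j
    have hqj : q j = ∑ i, Complex.normSq (M j i) := by
      have e1 : (M * Mᴴ) j j = ((∑ i, Complex.normSq (M j i) : ℝ) : ℂ) := by
        rw [Matrix.mul_apply]
        simp only [Matrix.conjTranspose_apply, RCLike.star_def]
        push_cast
        apply Finset.sum_congr rfl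
        intro i _
        rw [mul_comm, hcz]
      have e2 : qc j = (M * Mᴴ) j j := by rw [hMMH]
      rw [hqdef]
      simp only [e2, e1]
      simp
    have huj : u j = ∑ i, M j i * v i := by
      rw [hudef]
      rfl
    have cs : ‖u j‖ ≤ ∑ i, ‖M j i‖ * ‖v i‖ := by
      rw [huj]
      refine le_trans (norm_sum_le _ _) ?_
      apply le_of_eq
      apply Finset.sum_congr rfl
      intro i _
      exact norm_mul _ _
    have cs2 : (∑ i, ‖M j i‖ * ‖v i‖)^2
        ≤ (∑ i, ‖M j i‖^2) * (∑ i, ‖v i‖^2) :=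
      Finset.sum_mul_sq_le_sq_mul_sq _ _ _
    have habs : ‖u j‖^2 ≤ (∑ i, ‖M j i‖^2) * (∑ i, ‖v i‖^2) := by
      refine le_trans (pow_le_pow_left₀ (norm_nonneg _) cs 2) cs2
    rw [hnsqdef]
    simp only [← Complex.sq_norm] at habs ⊢
    calc ‖u j‖^2 ≤ (∑ i, ‖M j i‖^2) * (∑ i, ‖v i‖^2) := habs
      _ = q j := by
        simp only [Complex.sq_norm]
        rw [hvnorm, hqj, mul_one]
  -- Jensen
  have hεne : ε ≠ 0 := ne_of_gt hεpos
  have hwsum : ∑ i, nsq i / ε = 1 := by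
    rw [← Finset.sum_div, hsum_nsq, div_self hεne]
  have hmean : ∑ i, (nsq i / ε) • lam i = c / ε := by
    simp only [smul_eq_mul]
    rw [← hsum_nsq_lam, Finset.sum_div]
    apply Finset.sum_congr rfl
    intro i _
    ring
  have hjen := hcvx.map_sum_le (t := Finset.univ) (w := fun i => nsq i / ε) (p := lam)
    (fun i _ => div_nonneg (Complex.normSq_nonneg _) hεpos.le) hwsum
    (fun i _ => Set.mem_Ici.mpr (hlam i))
  rw [hmean] at hjen
  simp only [smul_eq_mul] at hjen
  have hjen2 : ε * f (c / ε) ≤ ∑ i, nsq i * f (lam i) := by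
    have h2 := mul_le_mul_of_nonneg_left hjen hεpos.le
    rw [Finset.mul_sum] at h2
    refine le_trans h2 (le_of_eq ?_)
    apply Finset.sum_congr rfl
    intro i _
    field_simp
  -- affine lower bound on the rest
  have hrest : α * (1 - c) + β * (σ'.trace.re - ε) ≤ ∑ i, (q i - nsq i) * f (lam i) := by
    have hterm : ∀ i ∈ Finset.univ, (q i - nsq i) * (α * lam i + β) ≤ (q i - nsq i) * f (lam i) :=
      fun i _ => mul_le_mul_of_nonneg_left (hαβ _ (hlam i)) (sub_nonneg.mpr (hnsq_le_q i))
    refine le_trans (le_of_eq ?_) (Finset.sum_le_sum hterm)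
    have expand : ∀ i : Fin n, (q i - nsq i) * (α * lam i + β)
        = α * (q i * lam i) - α * (nsq i * lam i) + (β * q i - β * nsq i) := fun i => by ring
    simp_rw [expand]
    rw [Finset.sum_add_distrib, Finset.sum_sub_distrib, Finset.sum_sub_distrib,
      ← Finset.mul_sum, ← Finset.mul_sum, ← Finset.mul_sum, ← Finset.mul_sum,
      h1, hsum_nsq_lam, hsum_q, hsum_nsq]
    ring
  -- put everything together
  rw [trace_re f]
  have hsplit : ∑ i, q i * f (lam i)
      = ∑ i, nsq i * f (lam i) + ∑ i, (q i - nsq i) * f (lam i) := by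
    rw [← Finset.sum_add_distrib]
    apply Finset.sum_congr rfl
    intro i _
    ring
  rw [hsplit]
  linarith

end Helper13d
section Helper13e

open Matrix

variable {n : ℕ}

lemma psd_trace_re_nonneg {A : Matrix (Fin n) (Fin n) ℂ} (hA : A.PosSemidef) :
    0 ≤ A.trace.re ∧ A.trace.im = 0 := by
  have hdiag : ∀ i, 0 ≤ (A i i).re ∧ (A i i).im = 0 := by
    intro i
    have h2 := hA.dotProduct_mulVec_nonneg (Pi.single i 1)
    rw [dot_single] at h2
    have := Complex.nonneg_iff.mp h2
    exact ⟨this.1, this.2.symm⟩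
  constructor
  · rw [Matrix.trace, Complex.re_sum]
    exact Finset.sum_nonneg fun i _ => (hdiag i).1
  · rw [Matrix.trace, Complex.im_sum]
    exact Finset.sum_eq_zero fun i _ => (hdiag i).2

end Helper13e

section Helper13f
open Matrix
variable {n : ℕ}

lemma sum_mulVec'' {ι : Type*} (s : Finset ι) (G : ι → Matrix (Fin n) (Fin n) ℂ)
    (w : Fin n → ℂ) : (∑ x ∈ s, G x) *ᵥ w = ∑ x ∈ s, (G x) *ᵥ w := by
  classical
  induction s using Finset.induction_on with
  | empty => simp
  | insert _ _ hx ih => rw [Finset.sum_insert hx, Finset.sum_insert hx, Matrix.add_mulVec, ih]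

lemma dotProduct_sum' {ι : Type*} (s : Finset ι) (v : Fin n → ℂ) (u : ι → Fin n → ℂ) :
    v ⬝ᵥ (∑ x ∈ s, u x) = ∑ x ∈ s, v ⬝ᵥ u x := by
  classical
  induction s using Finset.induction_on with
  | empty => simp
  | insert _ _ hx ih => rw [Finset.sum_insert hx, Finset.sum_insert hx, dotProduct_add, ih]

lemma dot_sum_smul {k : ℕ} (coef : Fin k → ℂ) (Γ : Fin k → Matrix (Fin n) (Fin n) ℂ)
    (w : Fin n → ℂ) :
    star w ⬝ᵥ (∑ x, coef x • Γ x) *ᵥ w = ∑ x, coef x * (star w ⬝ᵥ (Γ x) *ᵥ w) := by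
  rw [sum_mulVec'', dotProduct_sum']
  apply Finset.sum_congr rfl
  intro x _
  rw [Matrix.smul_mulVec, dotProduct_smul]
  rfl

end Helper13f

/-- if `f(y)/y → ∞` and `supp ρ ⊄ supp σ` then
`D'_f(ρ‖σ) = D_f^max(ρ‖σ) = ∞`, and `D'_f(ρ‖σₙ) → ∞` along any approximating sequence. -/
theorem stmt13 {n : ℕ} (f : ℝ → ℝ) (hf : IsOpConvexF f)
    (hlim : Tendsto (fun y : ℝ => f y / y) atTop atTop)
    (ρ σ : Matrix (Fin n) (Fin n) ℂ) (hρ : IsDensity ρ) (hσ : IsDensity σ)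
    (hsupp : ¬ suppLE ρ σ) :
    DfPrime f ρ σ = ⊤ ∧ DfMax (toE f) ρ σ = ⊤ ∧
    ∀ σs : ℕ → Matrix (Fin n) (Fin n) ℂ,
      (∀ k, (σs k).PosSemidef) →
      (∀ k, suppLE ρ (σs k) ∧ suppLE σ (σs k)) →
      Tendsto σs atTop (nhds σ) →
      Tendsto (fun k => DfPrime f ρ (σs k)) atTop (nhds (⊤ : EReal)) := by
  classical
  obtain ⟨hρpsd, hρtr⟩ := hρ
  obtain ⟨hσpsd, hσtr⟩ := hσ
  have hcvx : ConvexOn ℝ (Set.Ici 0) f := convexOn_of_opConvexF hf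
  have hf0 : f 0 = 0 := hf.2.1
  have hcz : ∀ z : ℂ, (starRingEnd ℂ) z * z = (Complex.normSq z : ℂ) := fun z => by
    rw [mul_comm, Complex.mul_conj]
  -- choose a normalized vector v in ker σ with v* ρ v > 0
  obtain ⟨v₀, hv₀σ, hv₀ρ⟩ := not_suppLE_exists hρpsd.1 hσpsd.1 hsupp
  have hv₀ne : v₀ ≠ 0 := fun h => hv₀ρ (by rw [h, Matrix.mulVec_zero])
  set t : ℝ := ∑ i, Complex.normSq (v₀ i) with htdef
  have ht0 : 0 < t := by
    obtain ⟨i, hi⟩ := Function.ne_iff.mp hv₀ne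
    exact Finset.sum_pos' (fun j _ => Complex.normSq_nonneg _)
      ⟨i, Finset.mem_univ i, Complex.normSq_pos.mpr hi⟩
  set a : ℝ := (Real.sqrt t)⁻¹ with hadef
  have ha0 : 0 < a := inv_pos.mpr (Real.sqrt_pos.mpr ht0)
  have haat : a * a * t = 1 := by
    rw [hadef, ← mul_inv, Real.mul_self_sqrt ht0.le]
    exact inv_mul_cancel₀ (ne_of_gt ht0)
  set v : Fin n → ℂ := ((a : ℝ) : ℂ) • v₀ with hvdef
  have hdot₀ : star v₀ ⬝ᵥ v₀ = ((t : ℝ) : ℂ) := by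
    simp only [dotProduct, Pi.star_apply, RCLike.star_def, hcz, htdef]
    push_cast
    rfl
  have hv1 : star v ⬝ᵥ v = 1 := by
    rw [hvdef, star_smul, smul_dotProduct, dotProduct_smul, hdot₀]
    rw [Complex.star_def, Complex.conj_ofReal, smul_eq_mul, smul_eq_mul,
      ← Complex.ofReal_mul, ← Complex.ofReal_mul]
    norm_cast
    rw [← mul_assoc]
    exact haat
  have hσv : σ *ᵥ v = 0 := by rw [hvdef, Matrix.mulVec_smul, hv₀σ, smul_zero]
  have hρv : ρ *ᵥ v ≠ 0 := by
    rw [hvdef, Matrix.mulVec_smul]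
    exact smul_ne_zero (Complex.ofReal_ne_zero.mpr (ne_of_gt ha0)) hv₀ρ
  set c : ℝ := (star v ⬝ᵥ ρ *ᵥ v).re with hcdef
  have hcpos : 0 < c := by
    have h1 := (Complex.nonneg_iff.mp (hρpsd.dotProduct_mulVec_nonneg v)).1
    rcases lt_or_eq_of_le h1 with h | h
    · exact h
    · exfalso
      apply hρv
      rw [← hρpsd.dotProduct_mulVec_zero_iff v, psd_dot_eq_re hρpsd, ← h]
      simp
  -- Part 1
  have part1 : DfPrime f ρ σ = ⊤ := by
    rw [DfPrime, if_neg hsupp, sInf_eq_top]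
    rintro D ⟨ρ₁, hρ₁psd, hρ₁le, hρ₁supp, rfl⟩
    have hne : ρ₁ ≠ ρ := fun h => hsupp (h ▸ hρ₁supp)
    have hdiff : (ρ - ρ₁).PosSemidef := hρ₁le
    have htrd := psd_trace_re_nonneg hdiff
    rw [Matrix.trace_sub, Complex.sub_re, Complex.sub_im] at htrd
    rw [hρtr] at htrd
    simp only [Complex.one_re, Complex.one_im] at htrd
    have htpos : 0 < 1 - ρ₁.trace.re := by
      rcases lt_or_eq_of_le htrd.1 with h | h
      · exact h
      · exfalso
        apply hne
        have hz : (ρ - ρ₁).trace = 0 := by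
          rw [Matrix.trace_sub]
          apply Complex.ext
          · simp [hρtr, ← h]
          · have := htrd.2
            simp only [zero_sub, neg_eq_zero] at this
            simp [hρtr, this]
        have := psd_trace_eq_zero hdiff hz
        have h2 : ρ - ρ₁ = 0 := this
        rw [sub_eq_zero] at h2
        exact h2.symm
    rw [zeroMulConv_eq_top hlim htpos, EReal.coe_add_top]
  -- Part 2
  have part2 : DfMax (toE f) ρ σ = ⊤ := by
    rw [DfMax, iInf_eq_top]
    intro k
    rw [iInf_eq_top]
    intro Γ
    rw [iInf_eq_top]
    intro p
    rw [iInf_eq_top]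
    intro q
    rw [iInf_eq_top]
    intro hRT
    obtain ⟨hΓpsd, hΓtr, hp, hq, hpρ, hqσ⟩ := hRT
    have hex : ∃ x, q x = 0 ∧ 0 < p x := by
      by_contra hc
      push_neg at hc
      apply hsupp
      apply suppLE_of_ker hρpsd.1 hσpsd.1
      intro w hw
      have hdotσ : star w ⬝ᵥ σ *ᵥ w = 0 := by rw [hw, dotProduct_zero]
      have hsum : ∑ x, (q x : ℂ) * (star w ⬝ᵥ (Γ x) *ᵥ w) = 0 := by
        have e1 := dot_sum_smul (fun x => (q x : ℂ)) Γ w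
        rw [hqσ, hw, dotProduct_zero] at e1
        exact e1.symm
      have hterm : ∀ x, (q x : ℝ) * (star w ⬝ᵥ (Γ x) *ᵥ w).re = 0 := by
        have hre := congrArg Complex.re hsum
        rw [Complex.re_sum] at hre
        simp only [Complex.zero_re] at hre
        have he : ∀ x, ((q x : ℂ) * (star w ⬝ᵥ (Γ x) *ᵥ w)).re
            = q x * (star w ⬝ᵥ (Γ x) *ᵥ w).re := by
          intro x
          rw [psd_dot_eq_re (hΓpsd x)]
          push_cast
          simp [Complex.mul_re]
        rw [Finset.sum_congr rfl (fun x _ => he x)] at hre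
        intro x
        have hnn : ∀ x ∈ Finset.univ, 0 ≤ q x * (star w ⬝ᵥ (Γ x) *ᵥ w).re := fun x _ =>
          mul_nonneg (hq x) (Complex.nonneg_iff.mp ((hΓpsd x).dotProduct_mulVec_nonneg w)).1
        exact (Finset.sum_eq_zero_iff_of_nonneg hnn).mp hre x (Finset.mem_univ x)
      have hΓw : ∀ x, 0 < p x → (Γ x) *ᵥ w = 0 := by
        intro x hpx
        have hqx : q x ≠ 0 := by
          intro h0
          exact absurd hpx (not_lt.mpr (hc x h0))
        have hr : (star w ⬝ᵥ (Γ x) *ᵥ w).re = 0 := by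
          have := hterm x
          rcases mul_eq_zero.mp this with h | h
          · exact absurd h hqx
          · exact h
        rw [← ((hΓpsd x).dotProduct_mulVec_zero_iff w), psd_dot_eq_re (hΓpsd x), hr]
        simp
      rw [← hpρ, sum_mulVec'']
      apply Finset.sum_eq_zero
      intro x _
      rw [Matrix.smul_mulVec]
      rcases eq_or_lt_of_le (hp x) with h | h
      · rw [← h]
        simp
      · rw [hΓw x h, smul_zero]
    obtain ⟨x₀, hqx₀, hpx₀⟩ := hex
    apply ereal_sum_eq_top (x₀ := x₀) _ (Finset.mem_univ x₀)
    · rw [if_pos hqx₀]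
      exact zeroMulConv_eq_top hlim hpx₀
    · intro x _
      by_cases hqx : q x = 0
      · rw [if_pos hqx]
        rcases lt_or_eq_of_le (hp x) with h | h
        · rw [zeroMulConv_eq_top hlim h]
          simp
        · rw [← h, zeroMulConv_zero hf0]
          have h0 : ((0:ℝ):EReal) ≠ ⊥ := EReal.coe_ne_bot 0
          simpa using h0
      · rw [if_neg hqx]
        rw [show ((q x : EReal) * toE f (p x / q x)) = (((q x * f (p x / q x) : ℝ)) : EReal)
          from by rw [EReal.coe_mul]; rfl]
        exact EReal.coe_ne_bot _
  refine ⟨part1, part2, ?_⟩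
  -- Part 3
  intro σs hσs hsupps hten
  obtain ⟨α, β, hαβ⟩ := exists_affine_minorant hcvx hf.1
  set e : ℕ → ℝ := fun k => (star v ⬝ᵥ (σs k) *ᵥ v).re with hedef
  have hepos : ∀ k, 0 < e k := by
    intro k
    have h1 := (Complex.nonneg_iff.mp ((hσs k).dotProduct_mulVec_nonneg v)).1
    rcases lt_or_eq_of_le h1 with h | h
    · exact h
    · exfalso
      apply hρv
      apply mulVec_eq_zero_of_suppLE hρpsd (hσs k).1 (hsupps k).1
      rw [← ((hσs k).dotProduct_mulVec_zero_iff v), psd_dot_eq_re (hσs k), ← h]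
      simp
  have hdotten : Tendsto (fun k => star v ⬝ᵥ (σs k) *ᵥ v) atTop (𝓝 (star v ⬝ᵥ σ *ᵥ v)) := by
    have hentry : ∀ i j, Tendsto (fun k => σs k i j) atTop (𝓝 (σ i j)) := by
      intro i j
      exact (tendsto_pi_nhds.mp ((tendsto_pi_nhds.mp hten) i)) j
    simp only [dotProduct, Matrix.mulVec]
    apply tendsto_finset_sum
    intro i _
    apply Tendsto.mul tendsto_const_nhds
    apply tendsto_finset_sum
    intro j _
    exact (hentry i j).mul tendsto_const_nhds
  have heten : Tendsto e atTop (𝓝 0) := by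
    have h0 : (star v ⬝ᵥ σ *ᵥ v).re = 0 := by
      rw [hσv, dotProduct_zero, Complex.zero_re]
    have h2 := (Complex.continuous_re.tendsto _).comp hdotten
    rw [h0] at h2
    exact h2
  have htrten : Tendsto (fun k => (σs k).trace.re) atTop (𝓝 1) := by
    have hentry : ∀ i, Tendsto (fun k => σs k i i) atTop (𝓝 (σ i i)) := fun i =>
      (tendsto_pi_nhds.mp ((tendsto_pi_nhds.mp hten) i)) i
    have h1 : Tendsto (fun k => (σs k).trace) atTop (𝓝 σ.trace) := by
      simp only [Matrix.trace, Matrix.diag]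
      exact tendsto_finset_sum _ (fun i _ => hentry i)
    have h2 := (Complex.continuous_re.tendsto _).comp h1
    rw [hσtr] at h2
    exact h2
  -- first summand tends to infinity
  have hfirst : Tendsto (fun k => e k * f (c / e k)) atTop atTop := by
    have h1 : Tendsto (fun k => c / e k) atTop atTop := by
      have h2 : Tendsto e atTop (𝓝[>] (0:ℝ)) :=
        tendsto_nhdsWithin_iff.mpr ⟨heten, Filter.Eventually.of_forall hepos⟩
      have h3 := (tendsto_inv_nhdsGT_zero (𝕜 := ℝ)).comp h2
      have h4 := Filter.Tendsto.const_mul_atTop hcpos h3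
      simpa [div_eq_mul_inv, Function.comp] using h4
    have h2 : Tendsto (fun k => c * (f (c / e k) / (c / e k))) atTop atTop :=
      Filter.Tendsto.const_mul_atTop hcpos (hlim.comp h1)
    apply h2.congr
    intro k
    have hek : e k ≠ 0 := ne_of_gt (hepos k)
    have hcne : c ≠ 0 := ne_of_gt hcpos
    field_simp
  have hG : Tendsto (fun k => e k * f (c / e k)
      + (α * (1 - c) + β * ((σs k).trace.re - e k))) atTop atTop := by
    apply Filter.tendsto_atTop_mono' atTop ?_ (tendsto_atTop_add_const_right atTop
      (α * (1 - c) + β * (1 - 0) - 1) hfirst)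
    have hconv : Tendsto (fun k => α * (1 - c) + β * ((σs k).trace.re - e k)) atTop
        (𝓝 (α * (1 - c) + β * (1 - 0))) := by
      apply Tendsto.add tendsto_const_nhds
      exact (htrten.sub heten).const_mul β
    filter_upwards [hconv.eventually (eventually_ge_nhds (by linarith : α * (1 - c) + β * (1 - 0) - 1 < α * (1 - c) + β * (1 - 0)))] with k hk
    have : α * (1 - c) + β * (1 - 0) - 1 ≤ α * (1 - c) + β * ((σs k).trace.re - e k) := hk
    linarith
  have hTten : Tendsto (fun k => ((σs k) * matFun f (dRN ρ (σs k))).trace.re) atTop atTop := by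
    apply Filter.tendsto_atTop_mono ?_ hG
    intro k
    have := key_lower_bound hcvx hαβ hρpsd hρtr (hσs k) (hsupps k).1 v hv1 (hepos k)
    calc e k * f (c / e k) + (α * (1 - c) + β * ((σs k).trace.re - e k))
        = e k * f (c / e k) + α * (1 - c) + β * ((σs k).trace.re - e k) := by ring
      _ ≤ _ := this
  rw [EReal.tendsto_nhds_top_iff_real]
  intro x
  filter_upwards [hTten.eventually_gt_atTop x] with k hk
  rw [DfPrime, if_pos (hsupps k).1]
  exact_mod_cast hk

end
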